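/- Let Δ_L be the Lichnerowicz Laplacian of a metric cone over a closed manifold F of dimension n, written over the cone as Δ_L = −∂²/∂x² − (n/x)∂/∂x + □_L/x², with tangential operator □_L ≥ −((n−1)/2)² on a dense domain. Then for compactly supported smooth sections ω, Δ_L ω = D^t D ω where D = ∂/∂x + (1/x)(sqrt(□_L + ((n−1)/2)²) + (n−1)/2); consequently Δ_L restricted to compactly supported smooth sections is a nonnegative operator. -/

import Mathlib

open RealInnerProductSpace MeasureTheory

/-- Factorization of the Lichnerowicz Laplacian on a cone: writing
`Δ_L = −∂ₓ² − (n/x)∂ₓ + □_L/x²` with tangential operator `□_L ≥ −((n−1)/2)²`,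
and letting `S = sqrt(□_L + ((n−1)/2)²)` (so `S` is symmetric, nonnegative,
with `S² = □_L + ((n−1)/2)²`), one has `Δ_L ω = Dᵗ D ω` for every smooth
compactly supported section `ω`, where `D = ∂ₓ + (1/x)(S + (n−1)/2)` and
`Dᵗ = −∂ₓ − n/x + (1/x)(S + (n−1)/2)` is its formal adjoint with respect to
the measure `xⁿ dx`; consequently `Δ_L` is nonnegative on such sections. -/
theorem stmt12 {V : Type*} [NormedAddCommGroup V] [InnerProductSpace ℝ V]
    (n : ℕ) (hn : 1 ≤ n) (B S : V →L[ℝ] V)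
    (hBsym : ∀ v w : V, ⟪B v, w⟫ = ⟪v, B w⟫)
    (hBlb : ∀ v : V, -(((n : ℝ) - 1) / 2) ^ 2 * ‖v‖ ^ 2 ≤ ⟪B v, v⟫)
    (hSsym : ∀ v w : V, ⟪S v, w⟫ = ⟪v, S w⟫)
    (hSnn : ∀ v : V, 0 ≤ ⟪S v, v⟫)
    (hSsq : ∀ v : V, S (S v) = B v + ((((n : ℝ) - 1) / 2) ^ 2) • v)
    (ω : ℝ → V) (hω : ContDiff ℝ (⊤ : ℕ∞) ω) (hcp : HasCompactSupport ω)
    (hsupp : tsupport ω ⊆ Set.Ioo 0 1) :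
    (∀ x ∈ Set.Ioo (0 : ℝ) 1,
      -(deriv (deriv ω) x) - ((n : ℝ) / x) • deriv ω x + (1 / x ^ 2) • B (ω x)
        = (fun η : ℝ → V => fun y : ℝ =>
            -(deriv η y) - ((n : ℝ) / y) • η y
              + (1 / y) • (S (η y) + (((n : ℝ) - 1) / 2) • η y))
            (fun y : ℝ =>
              deriv ω y + (1 / y) • (S (ω y) + (((n : ℝ) - 1) / 2) • ω y)) x) ∧
    0 ≤ ∫ x in Set.Ioo (0 : ℝ) 1,
        ⟪-(deriv (deriv ω) x) - ((n : ℝ) / x) • deriv ω x + (1 / x ^ 2) • B (ω x),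
          ω x⟫ * x ^ n := by
  -- basic differentiability
  have hdω : ∀ x : ℝ, HasDerivAt ω (deriv ω x) x :=
    fun x => (hω.differentiable (by simp) x).hasDerivAt
  have hd1 : ContDiff ℝ (⊤ : ℕ∞) (deriv ω) := by
    simpa using (hω.of_le (by simp) : ContDiff ℝ (⊤ : ℕ∞) ω).iterate_deriv 1
  have hddω : ∀ x : ℝ, HasDerivAt (deriv ω) (deriv (deriv ω) x) x :=
    fun x => (hd1.differentiable (by simp) x).hasDerivAt
  set η : ℝ → V :=
    fun y : ℝ => deriv ω y + (1 / y) • (S (ω y) + (((n : ℝ) - 1) / 2) • ω y) with hηdef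
  set η' : ℝ → V := fun x : ℝ =>
    deriv (deriv ω) x
      + ((1 / x) • (S (deriv ω x) + (((n : ℝ) - 1) / 2) • deriv ω x)
        + (-(1 / x ^ 2)) • (S (ω x) + (((n : ℝ) - 1) / 2) • ω x)) with hη'def
  have hηd : ∀ x : ℝ, x ≠ 0 → HasDerivAt η (η' x) x := by
    intro x hx
    have hinv : HasDerivAt (fun y : ℝ => 1 / y) (-(1 / x ^ 2)) x := by
      simpa [one_div] using hasDerivAt_inv hx
    have hv : HasDerivAt (fun y : ℝ => S (ω y) + (((n : ℝ) - 1) / 2) • ω y)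
        (S (deriv ω x) + (((n : ℝ) - 1) / 2) • deriv ω x) x :=
      (S.hasFDerivAt.comp_hasDerivAt x (hdω x)).add ((hdω x).const_smul _)
    exact (hddω x).add (hinv.smul hv)
  have part1 : ∀ x ∈ Set.Ioo (0 : ℝ) 1,
      -(deriv (deriv ω) x) - ((n : ℝ) / x) • deriv ω x + (1 / x ^ 2) • B (ω x)
        = -(deriv η x) - ((n : ℝ) / x) • η x
            + (1 / x) • (S (η x) + (((n : ℝ) - 1) / 2) • η x) := by
    intro x hx
    have hx0 : x ≠ 0 := ne_of_gt hx.1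
    rw [(hηd x hx0).deriv]
    simp only [hηdef, hη'def, map_add, _root_.map_smul, hSsq, smul_add, smul_smul,
      neg_add, smul_neg]
    match_scalars <;> field_simp <;> ring
  refine ⟨part1, ?_⟩
  -- choose an interval containing the support
  obtain ⟨m, hm⟩ : ∃ m, n = 1 + m := Nat.exists_eq_add_of_le hn
  set K : Set ℝ := tsupport ω ∪ Set.Icc (1/3 : ℝ) (1/2 : ℝ) with hK
  have hKc : IsCompact K := hcp.union isCompact_Icc
  have hKne : K.Nonempty := ⟨1/3, Or.inr ⟨le_refl _, by norm_num⟩⟩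
  have hKsub : K ⊆ Set.Ioo 0 1 := by
    intro x hx
    rcases hx with hx | hx
    · exact hsupp hx
    · exact ⟨lt_of_lt_of_le (by norm_num) hx.1, lt_of_le_of_lt hx.2 (by norm_num)⟩
  set a : ℝ := sInf K with ha
  set b : ℝ := sSup K with hb
  have haK : a ∈ K := hKc.sInf_mem hKne
  have hbK : b ∈ K := hKc.sSup_mem hKne
  have ha0 : 0 < a := (hKsub haK).1
  have hb1 : b < 1 := (hKsub hbK).2
  have hab : a ≤ b := le_csSup hKc.bddAbove haK
  set a' : ℝ := a / 2 with ha'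
  set b' : ℝ := (1 + b) / 2 with hb'
  have ha'0 : 0 < a' := by positivity
  have ha'a : a' < a := by simpa [ha'] using half_lt_self ha0
  have hbb' : b < b' := by rw [hb']; linarith
  have hb'1 : b' < 1 := by rw [hb']; linarith
  have ha'b' : a' ≤ b' := by linarith
  have hIcc : Set.Icc a' b' ⊆ Set.Ioo (0 : ℝ) 1 :=
    fun x hx => ⟨lt_of_lt_of_le ha'0 hx.1, lt_of_le_of_lt hx.2 hb'1⟩
  -- vanishing of ω outside (a', b')
  have hω0 : ∀ x : ℝ, x ∉ Set.Ioc a' b' → ω x = 0 := by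
    intro x hx
    apply image_eq_zero_of_notMem_tsupport
    intro hxs
    have hxK : x ∈ K := Or.inl hxs
    exact hx ⟨lt_of_lt_of_le ha'a (csInf_le hKc.bddBelow hxK),
      le_trans (le_csSup hKc.bddAbove hxK) (le_of_lt hbb')⟩
  -- the integrand
  set F : ℝ → ℝ := fun x =>
    ⟪-(deriv (deriv ω) x) - ((n : ℝ) / x) • deriv ω x + (1 / x ^ 2) • B (ω x),
      ω x⟫ * x ^ n with hF
  have hF0 : ∀ x : ℝ, ω x = 0 → F x = 0 := by
    intro x hx; simp [hF, hx]
  -- reduce the set integral to an interval integral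
  have step1 : ∫ x in Set.Ioo (0 : ℝ) 1, F x = ∫ x, F x := by
    apply setIntegral_eq_integral_of_forall_compl_eq_zero
    intro x hx
    exact hF0 x (image_eq_zero_of_notMem_tsupport (fun hxs => hx (hsupp hxs)))
  have step2 : ∫ x, F x = ∫ x in a'..b', F x := by
    refine (intervalIntegral.integral_eq_integral_of_support_subset ?_).symm
    intro x hx
    by_contra hxn
    exact hx (hF0 x (hω0 x hxn))
  -- the boundary function and its derivative
  set g : ℝ → ℝ := fun x => ⟪η x, ω x⟫ * x ^ n with hg
  set G : ℝ → ℝ := fun x =>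
    (⟪η x, deriv ω x⟫ + ⟪η' x, ω x⟫) * x ^ n + ⟪η x, ω x⟫ * (↑n * x ^ (n - 1)) with hG
  have hgd : ∀ x ∈ Set.uIcc a' b', HasDerivAt g (G x) x := by
    intro x hx
    rw [Set.uIcc_of_le ha'b'] at hx
    have hx0 : x ≠ 0 := ne_of_gt (hIcc hx).1
    exact (HasDerivAt.inner ℝ (hηd x hx0) (hdω x)).mul (hasDerivAt_pow n x)
  -- pointwise identity F = ⟪η,η⟫ x^n - G on the interval
  have key : ∀ x ∈ Set.uIcc a' b', F x = ⟪η x, η x⟫ * x ^ n - G x := by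
    intro x hx
    rw [Set.uIcc_of_le ha'b'] at hx
    have hx01 : x ∈ Set.Ioo (0 : ℝ) 1 := hIcc hx
    have hx0 : x ≠ 0 := ne_of_gt hx01.1
    have h1 := part1 x hx01
    rw [hF]
    simp only [h1, (hηd x hx0).deriv, hG]
    have hηx : η x = deriv ω x + (1 / x) • (S (ω x) + (((n : ℝ) - 1) / 2) • ω x) := rfl
    rw [show (⟪η x, η x⟫ : ℝ) =
        ⟪η x, deriv ω x + (1 / x) • (S (ω x) + (((n : ℝ) - 1) / 2) • ω x)⟫ by rw [← hηx]]
    have hS1 : (⟪S (η x), ω x⟫ : ℝ) = ⟪η x, S (ω x)⟫ := hSsym _ _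
    simp only [inner_add_left, inner_add_right, inner_neg_left, inner_sub_left,
      real_inner_smul_left, real_inner_smul_right, hS1]
    have hpow : x ^ n = x * x ^ (n - 1) := by
      rw [hm]; simp [pow_add]
    rw [hpow]
    field_simp
    ring
  -- continuity of the pieces
  have hcont_inv : ContinuousOn (fun y : ℝ => 1 / y) (Set.uIcc a' b') := by
    apply ContinuousOn.div continuousOn_const continuousOn_id
    intro x hx
    rw [Set.uIcc_of_le ha'b'] at hx
    exact ne_of_gt (hIcc hx).1
  have hcont_η : ContinuousOn η (Set.uIcc a' b') := by
    apply ContinuousOn.add (hd1.continuous.continuousOn)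
    exact hcont_inv.smul (((S.continuous.comp hω.continuous).add
      ((continuous_const.smul hω.continuous))).continuousOn)
  have hcont_η' : ContinuousOn η' (Set.uIcc a' b') := by
    have hd2 : Continuous (deriv (deriv ω)) := by
      have := (hd1.iterate_deriv 1)
      simpa using this.continuous
    apply ContinuousOn.add hd2.continuousOn
    apply ContinuousOn.add
    · exact hcont_inv.smul (((S.continuous.comp hd1.continuous).add
        ((continuous_const.smul hd1.continuous))).continuousOn)
    · refine ContinuousOn.smul ?_ (((S.continuous.comp hω.continuous).add
        ((continuous_const.smul hω.continuous))).continuousOn)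
      apply ContinuousOn.neg
      apply ContinuousOn.div continuousOn_const (continuousOn_pow 2)
      intro x hx
      rw [Set.uIcc_of_le ha'b'] at hx
      exact pow_ne_zero _ (ne_of_gt (hIcc hx).1)
  have hcont_P : ContinuousOn (fun x => ⟪η x, η x⟫ * x ^ n) (Set.uIcc a' b') :=
    (hcont_η.inner hcont_η).mul (continuousOn_pow n)
  have hcont_G : ContinuousOn G (Set.uIcc a' b') := by
    apply ContinuousOn.add
    · exact ((hcont_η.inner hd1.continuous.continuousOn).add
        (hcont_η'.inner hω.continuous.continuousOn)).mul (continuousOn_pow n)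
    · exact (hcont_η.inner hω.continuous.continuousOn).mul
        (continuousOn_const.mul (continuousOn_pow (n-1)))
  have hPi : IntervalIntegrable (fun x => ⟪η x, η x⟫ * x ^ n) volume a' b' :=
    hcont_P.intervalIntegrable
  have hGi : IntervalIntegrable G volume a' b' := hcont_G.intervalIntegrable
  -- FTC: ∫ G = g b' - g a' = 0
  have hga' : g a' = 0 := by
    have : ω a' = 0 := hω0 a' (by simp [Set.mem_Ioc])
    simp [hg, this]
  have hgb' : g b' = 0 := by
    have : ω b' = 0 := by
      apply image_eq_zero_of_notMem_tsupport
      intro hxs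
      have : b' ≤ b := le_csSup hKc.bddAbove (Or.inl hxs)
      linarith
    simp [hg, this]
  have hGint : ∫ x in a'..b', G x = 0 := by
    rw [intervalIntegral.integral_eq_sub_of_hasDerivAt hgd hGi, hga', hgb', sub_zero]
  -- put everything together
  have step3 : ∫ x in a'..b', F x = ∫ x in a'..b', ⟪η x, η x⟫ * x ^ n := by
    rw [intervalIntegral.integral_congr key, intervalIntegral.integral_sub hPi hGi,
      hGint, sub_zero]
  have step4 : 0 ≤ ∫ x in a'..b', ⟪η x, η x⟫ * x ^ n := by
    apply intervalIntegral.integral_nonneg ha'b'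
    intro x hx
    exact mul_nonneg real_inner_self_nonneg (pow_nonneg (le_of_lt (lt_of_lt_of_le ha'0 hx.1)) n)
  calc (0:ℝ) ≤ ∫ x in a'..b', ⟪η x, η x⟫ * x ^ n := step4
    _ = ∫ x in a'..b', F x := step3.symm
    _ = ∫ x, F x := step2.symm
    _ = ∫ x in Set.Ioo (0:ℝ) 1, F x := step1.symm
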